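/- arXiv:2102.00764 — 7 statements merged into one kernel-verified Lean document; each statement's English description precedes it below -/
import Mathlib

section
/- For any positive integer m, integers j, k with 0 ≤ j, k < m, and nonzero complex z, the polynomial B_{m,j,k} satisfies B_{m,j,k}(z) = (-1)^{j(m+1)} · z^m · B_{m, m-j, k}(z^{-1}). -/
open Finset

noncomputable def ee (x : ℝ) : ℂ := Complex.exp (2 * Real.pi * Complex.I * x)

noncomputable def B (m : ℕ) (j k : ℤ) (z : ℂ) : ℂ :=
  ∏ i ∈ Finset.Icc 1 m,
    (1 + ee ((i : ℝ) * ((j : ℝ) + (k : ℝ)) / m) + ee ((i : ℝ) * (j : ℝ) / m) * z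
      + ee ((i : ℝ) * (k : ℝ) / m) * z)

lemma ee_add (x y : ℝ) : ee (x + y) = ee x * ee y := by
  unfold ee
  rw [← Complex.exp_add]
  congr 1
  push_cast
  ring

lemma ee_zero : ee 0 = 1 := by simp [ee]

lemma ee_int (n : ℤ) : ee n = 1 := by
  unfold ee
  rw [show (2 * (Real.pi : ℂ) * Complex.I * ((n : ℝ) : ℂ)) =
      (n : ℂ) * (2 * Real.pi * Complex.I) by push_cast; ring]
  exact Complex.exp_int_mul_two_pi_mul_I n

lemma ee_sum {α : Type*} (s : Finset α) (f : α → ℝ) :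
    ∏ i ∈ s, ee (f i) = ee (∑ i ∈ s, f i) := by
  unfold ee
  rw [← Complex.exp_sum]
  congr 1
  rw [Complex.ofReal_sum, Finset.mul_sum]

lemma sum_Icc_id_real (m : ℕ) : ∑ i ∈ Finset.Icc 1 m, (i : ℝ) = m * (m + 1) / 2 := by
  induction m with
  | zero => simp
  | succ n ih =>
      rw [Finset.sum_Icc_succ_top (by omega), ih]
      push_cast
      ring

theorem B_reciprocal (m : ℕ) (hm : 0 < m) (j k : ℤ) (hj0 : 0 ≤ j) (hj : j < m)
    (hk0 : 0 ≤ k) (hk : k < m) (z : ℂ) (hz : z ≠ 0) :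
    B m j k z = (-1 : ℂ) ^ (j * (m + 1)) * z ^ m * B m ((m : ℤ) - j) k z⁻¹ := by
  have hm' : (m : ℝ) ≠ 0 := Nat.cast_ne_zero.mpr hm.ne'
  unfold B
  have key : ∀ i ∈ Finset.Icc 1 m,
      (1 + ee ((i : ℝ) * ((j : ℝ) + (k : ℝ)) / m) + ee ((i : ℝ) * (j : ℝ) / m) * z
        + ee ((i : ℝ) * (k : ℝ) / m) * z)
      = (z * ee ((i : ℝ) * (j : ℝ) / m)) *
        (1 + ee ((i : ℝ) * ((((m : ℤ) - j : ℤ) : ℝ) + (k : ℝ)) / m)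
          + ee ((i : ℝ) * (((m : ℤ) - j : ℤ) : ℝ) / m) * z⁻¹
          + ee ((i : ℝ) * (k : ℝ) / m) * z⁻¹) := by
    intro i _
    set a := ee ((i : ℝ) * (j : ℝ) / m) with ha
    set b := ee ((i : ℝ) * (k : ℝ) / m) with hb
    set d := ee ((i : ℝ) * (((m : ℤ) - j : ℤ) : ℝ) / m) with hd
    have hc : ee ((i : ℝ) * ((j : ℝ) + (k : ℝ)) / m) = a * b := by
      rw [ha, hb, ← ee_add]
      congr 1
      ring
    have hc' : ee ((i : ℝ) * ((((m : ℤ) - j : ℤ) : ℝ) + (k : ℝ)) / m) = d * b := by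
      rw [hd, hb, ← ee_add]
      congr 1
      ring
    have had : a * d = 1 := by
      rw [ha, hd, ← ee_add]
      have : (i : ℝ) * (j : ℝ) / m + (i : ℝ) * (((m : ℤ) - j : ℤ) : ℝ) / m = ((i : ℤ) : ℝ) := by
        push_cast
        field_simp
        ring
      rw [this, ee_int]
    have hzz : z * z⁻¹ = 1 := mul_inv_cancel₀ hz
    rw [hc, hc']
    have expand : z * a * (1 + d * b + d * z⁻¹ + b * z⁻¹)
        = z * a + (a * d) * (z * b) + (a * d) * (z * z⁻¹) + (a * b) * (z * z⁻¹) := by ring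
    rw [expand, had, hzz]
    ring
  rw [Finset.prod_congr rfl key, Finset.prod_mul_distrib]
  congr 1
  rw [Finset.prod_mul_distrib, Finset.prod_const, Nat.card_Icc, Nat.add_sub_cancel,
    ee_sum]
  have hsum : ∑ i ∈ Finset.Icc 1 m, (i : ℝ) * (j : ℝ) / m = (j : ℝ) * ((m : ℝ) + 1) / 2 := by
    rw [← Finset.sum_div, ← Finset.sum_mul, sum_Icc_id_real]
    field_simp
  rw [hsum]
  have : ee ((j : ℝ) * ((m : ℝ) + 1) / 2) = (-1 : ℂ) ^ (j * ((m : ℤ) + 1)) := by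
    unfold ee
    rw [show (2 * (Real.pi : ℂ) * Complex.I * (((j : ℝ) * ((m : ℝ) + 1) / 2 : ℝ) : ℂ))
        = ((j * ((m : ℤ) + 1) : ℤ) : ℂ) * ((Real.pi : ℂ) * Complex.I) by push_cast; ring,
      Complex.exp_int_mul, Complex.exp_pi_mul_I]
  rw [this]
  ring
end

section
/- For any positive integer m, integers j, k with 0 ≤ j, k < m, and d := gcd(m, gcd(j,k)), one has B_{m,j,k}(z) = (B_{m/d, j/d, k/d}(z))^d. -/
open Finset

lemma ee_add_nat (x : ℝ) (n : ℕ) : ee (x + n) = ee x := by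
  unfold ee
  rw [show (2 * (Real.pi : ℂ) * Complex.I * ((x : ℝ) + (n : ℕ) : ℝ)
      = 2 * Real.pi * Complex.I * x + n * (2 * Real.pi * Complex.I)) by push_cast; ring,
    Complex.exp_add, Complex.exp_nat_mul_two_pi_mul_I, mul_one]

lemma prod_Icc_periodic (f : ℕ → ℂ) (n : ℕ) (hf : ∀ i, f (i + n) = f i) (d : ℕ) :
    ∏ i ∈ Finset.Icc 1 (d * n), f i = (∏ i ∈ Finset.Icc 1 n, f i) ^ d := by
  have key : ∀ c i, f (i + c * n) = f i := by
    intro c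
    induction c with
    | zero => simp
    | succ c ih =>
      intro i
      rw [show i + (c + 1) * n = (i + n) + c * n by ring, ih, hf]
  have hr : ∀ e : ℕ, ∏ i ∈ Finset.range (e * n), f (1 + i)
      = (∏ i ∈ Finset.range n, f (1 + i)) ^ e := by
    intro e
    induction e with
    | zero => simp
    | succ e ih =>
      rw [Nat.succ_mul, Finset.prod_range_add, ih, pow_succ]
      congr 1
      refine Finset.prod_congr rfl fun i _ => ?_
      rw [show 1 + (e * n + i) = (1 + i) + e * n by ring, key]
  have hIcc : ∀ N : ℕ, ∏ i ∈ Finset.Icc 1 N, f i = ∏ i ∈ Finset.range N, f (1 + i) := by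
    intro N
    rw [← Finset.Ico_add_one_right_eq_Icc, Finset.prod_Ico_eq_prod_range]
    simp
  rw [hIcc, hIcc, hr]

theorem B_gcd_pow (m : ℕ) (hm : 0 < m) (j k : ℕ) (hj : j < m) (hk : k < m)
    (d : ℕ) (hd : d = Nat.gcd m (Nat.gcd j k)) (z : ℂ) :
    B m j k z = (B (m / d) (j / d) (k / d) z) ^ d := by
  have hd0 : 0 < d := hd ▸ Nat.gcd_pos_of_pos_left _ hm
  have hdm : d ∣ m := hd ▸ Nat.gcd_dvd_left _ _
  have hdj : d ∣ j := hd ▸ (Nat.gcd_dvd_right m _).trans (Nat.gcd_dvd_left j k)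
  have hdk : d ∣ k := hd ▸ (Nat.gcd_dvd_right m _).trans (Nat.gcd_dvd_right j k)
  set m' := m / d with hm'def
  set j' := j / d with hj'def
  set k' := k / d with hk'def
  have hm' : 0 < m' := Nat.div_pos (Nat.le_of_dvd hm hdm) hd0
  have hmm : (m : ℝ) = d * m' := by exact_mod_cast (Nat.mul_div_cancel' hdm).symm
  have hjj : (j : ℝ) = d * j' := by exact_mod_cast (Nat.mul_div_cancel' hdj).symm
  have hkk : (k : ℝ) = d * k' := by exact_mod_cast (Nat.mul_div_cancel' hdk).symm
  have hd0' : (d : ℝ) ≠ 0 := by positivity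
  have hm0' : (m' : ℝ) ≠ 0 := by positivity
  set F : ℕ → ℂ := fun i =>
    (1 + ee ((i : ℝ) * (((j' : ℤ) : ℝ) + ((k' : ℤ) : ℝ)) / m')
      + ee ((i : ℝ) * ((j' : ℤ) : ℝ) / m') * z
      + ee ((i : ℝ) * ((k' : ℤ) : ℝ) / m') * z) with hF
  have hper : ∀ i, F (i + m') = F i := by
    intro i
    simp only [hF]
    have h1 : ((i + m' : ℕ) : ℝ) * (((j' : ℤ) : ℝ) + ((k' : ℤ) : ℝ)) / m'
        = (i : ℝ) * (((j' : ℤ) : ℝ) + ((k' : ℤ) : ℝ)) / m' + ((j' + k' : ℕ) : ℝ) := by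
      push_cast
      field_simp
    have h2 : ((i + m' : ℕ) : ℝ) * ((j' : ℤ) : ℝ) / m'
        = (i : ℝ) * ((j' : ℤ) : ℝ) / m' + ((j' : ℕ) : ℝ) := by
      push_cast; field_simp
    have h3 : ((i + m' : ℕ) : ℝ) * ((k' : ℤ) : ℝ) / m'
        = (i : ℝ) * ((k' : ℤ) : ℝ) / m' + ((k' : ℕ) : ℝ) := by
      push_cast; field_simp
    rw [h1, h2, h3, ee_add_nat, ee_add_nat, ee_add_nat]
  have step1 : B m j k z = ∏ i ∈ Finset.Icc 1 m, F i := by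
    unfold B
    refine Finset.prod_congr rfl fun i _ => ?_
    simp only [hF]
    have e1 : (i : ℝ) * (((j : ℤ) : ℝ) + ((k : ℤ) : ℝ)) / m
        = (i : ℝ) * (((j' : ℤ) : ℝ) + ((k' : ℤ) : ℝ)) / m' := by
      push_cast
      rw [hmm, hjj, hkk]
      field_simp
    have e2 : (i : ℝ) * ((j : ℤ) : ℝ) / m = (i : ℝ) * ((j' : ℤ) : ℝ) / m' := by
      push_cast
      rw [hmm, hjj]
      field_simp
    have e3 : (i : ℝ) * ((k : ℤ) : ℝ) / m = (i : ℝ) * ((k' : ℤ) : ℝ) / m' := by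
      push_cast
      rw [hmm, hkk]
      field_simp
    rw [e1, e2, e3]
  have step2 : ∏ i ∈ Finset.Icc 1 m, F i = (∏ i ∈ Finset.Icc 1 m', F i) ^ d := by
    have : m = d * m' := Nat.mul_div_cancel' hdm |>.symm
    rw [this]
    exact prod_Icc_periodic F m' hper d
  rw [step1, step2]
  rfl
end

section
/- For any positive integer m and integer j with 0 ≤ j < m, letting d := gcd(m,j) and m' := m/d, one has B_{m,j,0}(z) = 2^d (1+z)^m if m' is odd, and B_{m,j,0}(z) = 0 if m' is even. -/
open Finset

private lemma shift_one (ζ : ℂ) (n : ℕ) (hζ : ζ ^ n = 1) (a : ℕ) :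
    ∏ i ∈ Finset.range n, (1 + ζ ^ (a + i)) = ∏ i ∈ Finset.range n, (1 + ζ ^ i) := by
  induction a with
  | zero => simp
  | succ a ih =>
    rw [← ih]
    rcases n with _ | k
    · simp
    rw [Finset.prod_range_succ, Finset.prod_range_succ']
    congr 1
    · exact Finset.prod_congr rfl fun i _ => by rw [show a + (i + 1) = a + 1 + i from by omega]
    · rw [show a + 1 + k = a + (k + 1) from by omega, pow_add, hζ, mul_one, Nat.add_zero]

private lemma periods (ζ : ℂ) (n : ℕ) (hζ : ζ ^ n = 1) (d a : ℕ) :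
    ∏ i ∈ Finset.range (d * n), (1 + ζ ^ (a + i)) = (∏ i ∈ Finset.range n, (1 + ζ ^ i)) ^ d := by
  induction d with
  | zero => simp
  | succ d ih =>
    rw [Nat.succ_mul, Finset.prod_range_add, ih, pow_succ]
    congr 1
    rw [← shift_one ζ n hζ (a + d * n)]
    exact Finset.prod_congr rfl fun i _ => by rw [show a + (d * n + i) = a + d * n + i from by omega]

theorem B_boundary (m : ℕ) (hm : 0 < m) (j : ℕ) (hj : j < m)
    (d : ℕ) (hd : d = Nat.gcd m j) (z : ℂ) :
    B m j 0 z = if Odd (m / d) then (2 : ℂ) ^ d * (1 + z) ^ m else 0 := by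
  have hd0 : 0 < d := by rw [hd]; exact Nat.gcd_pos_of_pos_left j hm
  have hdm : d ∣ m := by rw [hd]; exact Nat.gcd_dvd_left m j
  have hdj : d ∣ j := by rw [hd]; exact Nat.gcd_dvd_right m j
  have hm'pos : 0 < m / d := Nat.div_pos (Nat.le_of_dvd hm hdm) hd0
  have hcop : (j / d).Coprime (m / d) := by
    have h : 0 < Nat.gcd j m := Nat.gcd_pos_of_pos_right j hm
    have := Nat.coprime_div_gcd_div_gcd h
    rwa [Nat.gcd_comm j m, ← hd] at this
  set ζ : ℂ := ee ((j : ℝ) / m) with hζdef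
  have hζeq : ζ = Complex.exp (2 * Real.pi * Complex.I * (((j / d : ℕ) : ℂ) / ((m / d : ℕ) : ℂ))) := by
    rw [hζdef, ee]
    congr 1
    have h1 : ((j / d : ℕ) : ℂ) = (j : ℂ) / (d : ℂ) := by
      rw [Nat.cast_div hdj]
      exact_mod_cast (Nat.cast_ne_zero (R := ℂ)).mpr hd0.ne'
    have h2 : ((m / d : ℕ) : ℂ) = (m : ℂ) / (d : ℂ) := by
      rw [Nat.cast_div hdm]
      exact_mod_cast (Nat.cast_ne_zero (R := ℂ)).mpr hd0.ne'
    rw [h1, h2]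
    have hdne : (d : ℂ) ≠ 0 := (Nat.cast_ne_zero (R := ℂ)).mpr hd0.ne'
    have hmne : (m : ℂ) ≠ 0 := (Nat.cast_ne_zero (R := ℂ)).mpr hm.ne'
    push_cast
    field_simp
  have hprim : IsPrimitiveRoot ζ (m / d) := by
    rw [hζeq]
    exact Complex.isPrimitiveRoot_exp_of_coprime (j / d) (m / d) hm'pos.ne' hcop
  have hζpow : ζ ^ (m / d) = 1 := hprim.pow_eq_one
  have hpow : ∀ i : ℕ, ee ((i : ℝ) * (j : ℝ) / m) = ζ ^ i := by
    intro i
    rw [hζdef, ee, ee, ← Complex.exp_nat_mul]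
    congr 1
    push_cast
    ring
  -- one-period product
  have key : ∏ i ∈ Finset.range (m / d), (1 + ζ ^ i) = 1 - (-1 : ℂ) ^ (m / d) := by
    have h := X_pow_sub_C_eq_prod hprim hm'pos (one_pow (m / d))
    apply_fun Polynomial.eval (-1 : ℂ) at h
    simp only [Polynomial.eval_sub, Polynomial.eval_pow, Polynomial.eval_X, Polynomial.eval_C,
      Polynomial.eval_prod, mul_one] at h
    have h2 : ∏ i ∈ Finset.range (m / d), (-1 - ζ ^ i : ℂ)
        = (-1 : ℂ) ^ (m / d) * ∏ i ∈ Finset.range (m / d), (1 + ζ ^ i) := by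
      have hfac : ∀ i ∈ Finset.range (m / d), (-1 - ζ ^ i : ℂ) = (-1) * (1 + ζ ^ i) :=
        fun i _ => by ring
      rw [Finset.prod_congr rfl hfac, Finset.prod_mul_distrib, Finset.prod_const,
        Finset.card_range]
    rw [h2] at h
    have hsq : ((-1 : ℂ) ^ (m / d)) * ((-1 : ℂ) ^ (m / d)) = 1 := by
      rw [← mul_pow]; norm_num
    set s : ℂ := (-1 : ℂ) ^ (m / d)
    set Q : ℂ := ∏ i ∈ Finset.range (m / d), (1 + ζ ^ i)
    calc Q = (s * s) * Q := by rw [hsq, one_mul]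
      _ = s * (s * Q) := by ring
      _ = s * (s - 1) := by rw [← h]
      _ = 1 - s := by rw [mul_sub, hsq, mul_one]
  -- rewrite B
  have hB : B m j 0 z = (∏ i ∈ Finset.Icc 1 m, (1 + ζ ^ i)) * (1 + z) ^ m := by
    rw [B]
    have : ∀ i ∈ Finset.Icc 1 m,
        (1 + ee ((i : ℝ) * (((j : ℤ) : ℝ) + ((0 : ℤ) : ℝ)) / m)
          + ee ((i : ℝ) * ((j : ℤ) : ℝ) / m) * z + ee ((i : ℝ) * ((0 : ℤ) : ℝ) / m) * z)
        = (1 + ζ ^ i) * (1 + z) := by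
      intro i _
      have h0 : ee ((i : ℝ) * ((0 : ℤ) : ℝ) / m) = 1 := by
        simp [ee]
      have hj' : ((i : ℝ) * (((j : ℤ) : ℝ) + ((0 : ℤ) : ℝ)) / m) = (i : ℝ) * (j : ℝ) / m := by
        push_cast; ring
      have hj'' : ((i : ℝ) * ((j : ℤ) : ℝ) / m) = (i : ℝ) * (j : ℝ) / m := by
        push_cast; ring
      rw [h0, hj', hj'', hpow i]
      ring
    rw [Finset.prod_congr rfl this, Finset.prod_mul_distrib, Finset.prod_const, Nat.card_Icc]
    norm_num
  have hIcc : ∏ i ∈ Finset.Icc 1 m, (1 + ζ ^ i) = (∏ i ∈ Finset.range (m / d), (1 + ζ ^ i)) ^ d := by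
    rw [← Finset.Ico_add_one_right_eq_Icc, Finset.prod_Ico_eq_prod_range]
    have hmm : m = d * (m / d) := (Nat.mul_div_cancel' hdm).symm
    rw [show m + 1 - 1 = d * (m / d) from by omega]
    exact periods ζ (m / d) hζpow d 1
  rw [hB, hIcc, key]
  rcases Nat.even_or_odd (m / d) with he | ho
  · rw [if_neg (Nat.not_odd_iff_even.mpr he), he.neg_one_pow, sub_self,
      zero_pow hd0.ne', zero_mul]
  · rw [if_pos ho, ho.neg_one_pow]
    norm_num
end

section
/- For any positive integer m, any integer j with 0 ≤ j < m, and any complex u, ∏_{i=1}^{m} (1 + e(ij/m)·u) = (1 - (-u)^{m/d})^d, where d := gcd(m, j) and e(x) := exp(2πi x). -/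
open Finset

lemma prod_one_sub_mul (n : ℕ) (hn : 0 < n) (ζ : ℂ) (hζ : IsPrimitiveRoot ζ n) (t : ℂ) :
    ∏ i ∈ range n, (1 - ζ ^ i * t) = 1 - t ^ n := by
  rcases eq_or_ne t 0 with rfl | ht
  · simp [zero_pow hn.ne']
  · have h := X_pow_sub_C_eq_prod hζ hn (one_pow n)
    have h2 := congrArg (Polynomial.eval t⁻¹) h
    simp only [Polynomial.eval_sub, Polynomial.eval_pow, Polynomial.eval_X, Polynomial.eval_one,
      Polynomial.eval_prod, Polynomial.eval_C, map_one, mul_one] at h2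
    have key : ∏ i ∈ range n, (1 - ζ ^ i * t) = t ^ n * ∏ i ∈ range n, (t⁻¹ - ζ ^ i) := by
      rw [show (t : ℂ) ^ n = ∏ _i ∈ range n, t from by simp, ← Finset.prod_mul_distrib]
      exact Finset.prod_congr rfl fun i _ => by field_simp
    rw [key, ← h2]
    field_simp
    rw [one_div, mul_sub, ← mul_pow, mul_inv_cancel₀ ht, one_pow, mul_one]

lemma prod_pow_periodic (ζ : ℂ) (n d : ℕ) (hζ : ζ ^ n = 1) (f : ℂ → ℂ) :
    ∏ i ∈ range (n * d), f (ζ ^ i) = (∏ i ∈ range n, f (ζ ^ i)) ^ d := by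
  induction d with
  | zero => simp
  | succ d ih =>
    rw [Nat.mul_succ, Finset.prod_range_add, ih, pow_succ]
    congr 1
    refine Finset.prod_congr rfl fun i _ => ?_
    congr 1
    rw [pow_add, pow_mul, hζ, one_pow, one_mul]

lemma prod_Icc_pow_eq_prod_range (m : ℕ) (hm : 0 < m) (ζ : ℂ) (hζ : ζ ^ m = 1) (f : ℂ → ℂ) :
    ∏ i ∈ Icc 1 m, f (ζ ^ i) = ∏ i ∈ range m, f (ζ ^ i) := by
  rw [← Finset.Ico_insert_right (by omega : 1 ≤ m), Finset.range_eq_Ico,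
    ← Finset.insert_Ico_add_one_left_eq_Ico hm, Finset.prod_insert (by simp),
    Finset.prod_insert (by simp), hζ, pow_zero, zero_add]

lemma ee_pow (m j : ℕ) (i : ℕ) :
    ee ((i : ℝ) * (j : ℝ) / m) = ee ((j : ℝ) / m) ^ i := by
  rw [ee, ee, ← Complex.exp_nat_mul]
  congr 1
  push_cast
  ring

lemma zeta_prim (m : ℕ) (hm : 0 < m) (j : ℕ) :
    IsPrimitiveRoot (ee ((j : ℝ) / m)) (m / Nat.gcd m j) := by
  have h1 := Complex.isPrimitiveRoot_exp m hm.ne'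
  have hzj : ee ((j : ℝ) / m) = Complex.exp (2 * Real.pi * Complex.I / m) ^ j := by
    rw [ee, ← Complex.exp_nat_mul]
    congr 1
    push_cast
    ring
  rcases Nat.eq_zero_or_pos j with rfl | hj0
  · simp only [Nat.gcd_zero_right, Nat.div_self hm, hzj, pow_zero]
    exact IsPrimitiveRoot.one
  · have h2 : orderOf (Complex.exp (2 * Real.pi * Complex.I / m)) = m := h1.eq_orderOf.symm
    have h3 : orderOf (ee ((j : ℝ) / m)) = m / Nat.gcd m j := by
      rw [hzj, orderOf_pow' _ hj0.ne', h2]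
    exact h3 ▸ IsPrimitiveRoot.orderOf _

theorem prod_one_add_root_of_unity_mul (m : ℕ) (hm : 0 < m) (j : ℕ) (hj : j < m)
    (d : ℕ) (hd : d = Nat.gcd m j) (u : ℂ) :
    ∏ i ∈ Finset.Icc 1 m, (1 + ee ((i : ℝ) * (j : ℝ) / m) * u)
      = (1 - (-u) ^ (m / d)) ^ d := by
  set n : ℕ := m / d with hn_def
  set ζ : ℂ := ee ((j : ℝ) / m) with hζ_def
  have hd0 : 0 < d := hd ▸ Nat.gcd_pos_of_pos_left _ hm
  have hdvd : d ∣ m := hd ▸ Nat.gcd_dvd_left m j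
  have hn : 0 < n := Nat.div_pos (Nat.le_of_dvd hm hdvd) hd0
  have hprim : IsPrimitiveRoot ζ n := by rw [hζ_def, hn_def, hd]; exact zeta_prim m hm j
  have hmn : m = n * d := by rw [hn_def, Nat.div_mul_cancel hdvd]
  have hζm : ζ ^ m = 1 := by rw [hmn, pow_mul, hprim.pow_eq_one, one_pow]
  calc ∏ i ∈ Finset.Icc 1 m, (1 + ee ((i : ℝ) * (j : ℝ) / m) * u)
      = ∏ i ∈ Finset.Icc 1 m, (1 + ζ ^ i * u) := by
        exact Finset.prod_congr rfl fun i _ => by rw [ee_pow]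
    _ = ∏ i ∈ range m, (1 + ζ ^ i * u) :=
        prod_Icc_pow_eq_prod_range m hm ζ hζm (fun z => 1 + z * u)
    _ = (∏ i ∈ range n, (1 + ζ ^ i * u)) ^ d := by
        rw [hmn]; exact prod_pow_periodic ζ n d hprim.pow_eq_one (fun z => 1 + z * u)
    _ = (1 - (-u) ^ n) ^ d := by
        congr 1
        rw [← prod_one_sub_mul n hn ζ hprim (-u)]
        exact Finset.prod_congr rfl fun i _ => by ring
end

section
/- Let m be an odd positive integer and j, k integers with 0 ≤ j, k < m and gcd(m, gcd(j,k)) = 1. Then B_{m,j,k}(z) = 2^m (1+z) · ∏_{i=1}^{(m-1)/2} ( cos(πi(j+k)/m) + z·cos(πi(j−k)/m) )^2 for all complex z. -/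
open Finset

lemma expc {x y : ℂ} (h : x = y) : Complex.exp x = Complex.exp y := by rw [h]

lemma cosc (x : ℝ) : (Real.cos x : ℂ)
    = (Complex.exp (x * Complex.I) + Complex.exp (-(x * Complex.I))) / 2 := by
  rw [Complex.ofReal_cos, Complex.cos]; ring_nf

lemma ee_nat (n : ℕ) : ee n = 1 := by
  rw [ee, ← Complex.exp_int_mul_two_pi_mul_I (n:ℤ)]
  exact expc (by push_cast; ring)

lemma Afact (a b : ℝ) (z : ℂ) :
    1 + ee (a + b) + ee a * z + ee b * z
      = 2 * ee ((a + b) / 2) *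
        ((Real.cos (Real.pi * (a + b)) : ℂ) + z * (Real.cos (Real.pi * (a - b)) : ℂ)) := by
  have hu : ∀ x : ℝ, Complex.exp (Real.pi * x * Complex.I) ≠ 0 := fun x => Complex.exp_ne_zero _
  set u := Complex.exp (Real.pi * (a:ℝ) * Complex.I) with hudef
  set v := Complex.exp (Real.pi * (b:ℝ) * Complex.I) with hvdef
  have h1 : ee a = u * u := by
    rw [ee, hudef, ← Complex.exp_add]; exact expc (by ring)
  have h2 : ee b = v * v := by
    rw [ee, hvdef, ← Complex.exp_add]; exact expc (by ring)
  have h3 : ee (a + b) = u * u * (v * v) := by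
    rw [ee, hudef, hvdef, ← Complex.exp_add, ← Complex.exp_add, ← Complex.exp_add]
    exact expc (by push_cast; ring)
  have h4 : ee ((a + b) / 2) = u * v := by
    rw [ee, hudef, hvdef, ← Complex.exp_add]; exact expc (by push_cast; ring)
  have h5 : (Real.cos (Real.pi * (a + b)) : ℂ) = (u * v + (u * v)⁻¹) / 2 := by
    rw [cosc, Complex.exp_neg, hudef, hvdef, ← Complex.exp_add]
    congr 2
    · exact expc (by push_cast; ring)
    · exact congrArg Inv.inv (expc (by push_cast; ring))
  have h6 : (Real.cos (Real.pi * (a - b)) : ℂ) = (u * v⁻¹ + u⁻¹ * v) / 2 := by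
    have e1 : Complex.exp ((Real.pi * (a - b) : ℝ) * Complex.I) = u * v⁻¹ := by
      rw [hudef, hvdef, ← Complex.exp_neg, ← Complex.exp_add]; exact expc (by push_cast; ring)
    rw [cosc, Complex.exp_neg, e1, mul_inv, inv_inv]
  rw [h1, h2, h3, h4, h5, h6]
  have hu0 : u ≠ 0 := hu a
  have hv0 : v ≠ 0 := hu b
  field_simp
  ring

lemma Bfactor (m j k : ℕ) (z : ℂ) (i : ℕ) :
    1 + ee ((i:ℝ) * ((j:ℝ) + (k:ℝ)) / m) + ee ((i:ℝ) * (j:ℝ) / m) * z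
      + ee ((i:ℝ) * (k:ℝ) / m) * z
    = 2 * ee ((i:ℝ) * ((j:ℝ) + (k:ℝ)) / m / 2) *
      ((Real.cos (Real.pi * ((i:ℝ) * ((j:ℝ) + k) / m)) : ℂ)
        + z * (Real.cos (Real.pi * ((i:ℝ) * ((j:ℝ) - k) / m)) : ℂ)) := by
  have ha : (i:ℝ) * (j:ℝ) / m + (i:ℝ) * (k:ℝ) / m = (i:ℝ) * ((j:ℝ) + k) / m := by ring
  have hb : (i:ℝ) * (j:ℝ) / m - (i:ℝ) * (k:ℝ) / m = (i:ℝ) * ((j:ℝ) - k) / m := by ring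
  have := Afact ((i:ℝ) * j / m) ((i:ℝ) * k / m) z
  rw [ha, hb] at this
  exact this

lemma pair (m j k : ℕ) (hm : 0 < m) (z : ℂ) (i : ℕ) (hi : i ≤ m) :
    (1 + ee ((i:ℝ) * ((j:ℝ) + (k:ℝ)) / m) + ee ((i:ℝ) * (j:ℝ) / m) * z
      + ee ((i:ℝ) * (k:ℝ) / m) * z) *
    (1 + ee (((m-i:ℕ):ℝ) * ((j:ℝ) + (k:ℝ)) / m) + ee (((m-i:ℕ):ℝ) * (j:ℝ) / m) * z
      + ee (((m-i:ℕ):ℝ) * (k:ℝ) / m) * z)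
    = 4 * ((Real.cos (Real.pi * ((i:ℝ) * ((j:ℝ) + k) / m)) : ℂ)
        + z * (Real.cos (Real.pi * ((i:ℝ) * ((j:ℝ) - k) / m)) : ℂ)) ^ 2 := by
  have hm' : (m:ℝ) ≠ 0 := Nat.cast_ne_zero.mpr hm.ne'
  have hsub : ((m - i : ℕ) : ℝ) = (m:ℝ) - i := by
    push_cast [Nat.cast_sub hi]; ring
  set s := Real.cos (Real.pi * ((j:ℝ) + k)) with hsdef
  have hsin : Real.sin (Real.pi * ((j:ℝ) + k)) = 0 := by
    rw [mul_comm]; push_cast [← Real.sin_nat_mul_pi (j + k)]; ring_nf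
  have hsin' : Real.sin (Real.pi * ((j:ℝ) - k)) = 0 := by
    rw [mul_comm]
    have := Real.sin_int_mul_pi ((j:ℤ) - k)
    push_cast at this ⊢
    convert this using 2
  have hcos' : Real.cos (Real.pi * ((j:ℝ) - k)) = s := by
    rw [hsdef]
    have := Real.cos_add_int_mul_two_pi (Real.pi * ((j:ℝ) - k)) k
    rw [← this]; congr 1; push_cast; ring
  have key1 : Real.cos (Real.pi * (((m:ℝ) - i) * ((j:ℝ) + k) / m))
      = s * Real.cos (Real.pi * ((i:ℝ) * ((j:ℝ) + k) / m)) := by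
    have harg : Real.pi * (((m:ℝ) - i) * ((j:ℝ) + k) / m)
        = Real.pi * ((j:ℝ) + k) - Real.pi * ((i:ℝ) * ((j:ℝ) + k) / m) := by
      field_simp
    rw [harg, Real.cos_sub, hsin]; ring
  have key2 : Real.cos (Real.pi * (((m:ℝ) - i) * ((j:ℝ) - k) / m))
      = s * Real.cos (Real.pi * ((i:ℝ) * ((j:ℝ) - k) / m)) := by
    have harg : Real.pi * (((m:ℝ) - i) * ((j:ℝ) - k) / m)
        = Real.pi * ((j:ℝ) - k) - Real.pi * ((i:ℝ) * ((j:ℝ) - k) / m) := by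
      field_simp
    rw [harg, Real.cos_sub, hsin', hcos']; ring
  have hes : ee ((i:ℝ) * ((j:ℝ) + (k:ℝ)) / m / 2) * ee (((m:ℝ) - i) * ((j:ℝ) + (k:ℝ)) / m / 2)
      = (s : ℂ) := by
    rw [ee, ee, ← Complex.exp_add]
    have hmc : (m:ℂ) ≠ 0 := Nat.cast_ne_zero.mpr hm.ne'
    have step : Complex.exp (2 * ↑Real.pi * Complex.I * ↑((i:ℝ) * ((j:ℝ) + (k:ℝ)) / m / 2)
          + 2 * ↑Real.pi * Complex.I * ↑(((m:ℝ) - i) * ((j:ℝ) + (k:ℝ)) / m / 2))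
        = Complex.exp ((Real.pi * ((j:ℝ) + k) : ℝ) * Complex.I) := by
      apply expc
      push_cast
      field_simp
      ring
    rw [step, Complex.exp_mul_I, ← Complex.ofReal_cos, ← Complex.ofReal_sin, hsin, hsdef]
    simp
  have hss : (s : ℂ) * (s : ℂ) = 1 := by
    have h0 : s * s = 1 := by
      have := Real.sin_sq_add_cos_sq (Real.pi * ((j:ℝ) + k))
      rw [hsin] at this
      nlinarith [this]
    rw [← Complex.ofReal_mul, h0, Complex.ofReal_one]
  rw [Bfactor, Bfactor, hsub, key1, key2, Complex.ofReal_mul, Complex.ofReal_mul]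
  set c1 := (Real.cos (Real.pi * ((i:ℝ) * ((j:ℝ) + k) / m)) : ℂ)
  set c2 := (Real.cos (Real.pi * ((i:ℝ) * ((j:ℝ) - k) / m)) : ℂ)
  linear_combination (4 * (s:ℂ) * (c1 + z * c2)^2) * hes + (4 * (c1 + z * c2)^2) * hss

theorem B_odd (m : ℕ) (hm : 0 < m) (hmodd : Odd m) (j k : ℕ) (hj : j < m) (hk : k < m)
    (hcop : Nat.gcd m (Nat.gcd j k) = 1) (z : ℂ) :
    B m j k z = 2 ^ m * (1 + z) *
      ∏ i ∈ Finset.Icc 1 ((m - 1) / 2),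
        ((Real.cos (Real.pi * i * ((j : ℝ) + k) / m) : ℂ)
          + z * (Real.cos (Real.pi * i * ((j : ℝ) - k) / m) : ℂ)) ^ 2 := by
  obtain ⟨h, rfl⟩ := hmodd
  set F : ℕ → ℂ := fun i =>
    1 + ee ((i:ℝ) * ((j:ℝ) + (k:ℝ)) / ((2*h+1 : ℕ):ℝ))
      + ee ((i:ℝ) * (j:ℝ) / ((2*h+1 : ℕ):ℝ)) * z
      + ee ((i:ℝ) * (k:ℝ) / ((2*h+1 : ℕ):ℝ)) * z with hF
  have hB : B (2*h+1) j k z = ∏ i ∈ Finset.Icc 1 (2*h+1), F i := by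
    rw [B]
    exact Finset.prod_congr rfl (fun i _ => by rw [hF]; push_cast; ring_nf)
  have hm0 : ((2*h+1 : ℕ):ℝ) ≠ 0 := by positivity
  have htop : F (2*h+1) = 2 * (1 + z) := by
    rw [hF]
    simp only
    rw [show ((2*h+1 : ℕ):ℝ) * ((j:ℝ) + (k:ℝ)) / ((2*h+1 : ℕ):ℝ) = ((j+k : ℕ):ℝ) by
        push_cast; field_simp,
      show ((2*h+1 : ℕ):ℝ) * (j:ℝ) / ((2*h+1 : ℕ):ℝ) = ((j : ℕ):ℝ) by field_simp,
      show ((2*h+1 : ℕ):ℝ) * (k:ℝ) / ((2*h+1 : ℕ):ℝ) = ((k : ℕ):ℝ) by field_simp,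
      ee_nat, ee_nat, ee_nat]
    ring
  have hpair : ∀ i ∈ Finset.Ioc 0 h, F i * F (2*h+1 - i) =
      4 * ((Real.cos (Real.pi * ((i:ℝ) * ((j:ℝ) + k) / ((2*h+1 : ℕ):ℝ))) : ℂ)
        + z * (Real.cos (Real.pi * ((i:ℝ) * ((j:ℝ) - k) / ((2*h+1 : ℕ):ℝ))) : ℂ)) ^ 2 := by
    intro i hi
    simp only [Finset.mem_Ioc] at hi
    exact pair (2*h+1) j k (by omega) z i (by omega)
  have h1 : Finset.Icc 1 (2*h+1) = Finset.Ioc 0 (2*h+1) := by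
    ext x; simp [Finset.mem_Icc, Finset.mem_Ioc]; omega
  rw [hB, h1, ← Finset.prod_Ioc_consecutive F (Nat.zero_le (2*h)) (by omega),
    show Finset.Ioc (2*h) (2*h+1) = {2*h+1} by ext x; simp [Finset.mem_Ioc],
    Finset.prod_singleton, htop,
    ← Finset.prod_Ioc_consecutive F (Nat.zero_le h) (by omega : h ≤ 2*h)]
  have h2 : ∏ i ∈ Finset.Ioc h (2*h), F i = ∏ i ∈ Finset.Ioc 0 h, F (2*h+1 - i) := by
    apply Finset.prod_nbij' (fun i => 2*h+1 - i) (fun i => 2*h+1 - i)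
    · intro a ha; simp [Finset.mem_Ioc] at ha ⊢; omega
    · intro a ha; simp [Finset.mem_Ioc] at ha ⊢; omega
    · intro a ha; simp [Finset.mem_Ioc] at ha; omega
    · intro a ha; simp [Finset.mem_Ioc] at ha; omega
    · intro a ha; simp [Finset.mem_Ioc] at ha
      rw [show 2*h+1 - (2*h+1-a) = a by omega]
  rw [h2, ← Finset.prod_mul_distrib, Finset.prod_congr rfl hpair, Finset.prod_mul_distrib,
    Finset.prod_const, Nat.card_Ioc]
  have h3 : (2*h+1 - 1) / 2 = h := by omega
  have h4 : Finset.Icc 1 ((2*h+1 - 1)/2) = Finset.Ioc 0 h := by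
    rw [h3]; ext x; simp [Finset.mem_Icc, Finset.mem_Ioc]; omega
  rw [h4]
  have h5 : ∏ i ∈ Finset.Ioc 0 h,
        ((Real.cos (Real.pi * i * ((j : ℝ) + k) / ((2*h+1 : ℕ):ℝ)) : ℂ)
          + z * (Real.cos (Real.pi * i * ((j : ℝ) - k) / ((2*h+1 : ℕ):ℝ)) : ℂ)) ^ 2
      = ∏ i ∈ Finset.Ioc 0 h,
        ((Real.cos (Real.pi * ((i:ℝ) * ((j:ℝ) + k) / ((2*h+1 : ℕ):ℝ))) : ℂ)
          + z * (Real.cos (Real.pi * ((i:ℝ) * ((j:ℝ) - k) / ((2*h+1 : ℕ):ℝ))) : ℂ)) ^ 2 := by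
    apply Finset.prod_congr rfl
    intro i _
    rw [show Real.pi * (i:ℝ) * ((j : ℝ) + k) / ((2*h+1 : ℕ):ℝ)
        = Real.pi * ((i:ℝ) * ((j:ℝ) + k) / ((2*h+1 : ℕ):ℝ)) by ring,
      show Real.pi * (i:ℝ) * ((j : ℝ) - k) / ((2*h+1 : ℕ):ℝ)
        = Real.pi * ((i:ℝ) * ((j:ℝ) - k) / ((2*h+1 : ℕ):ℝ)) by ring]
  rw [h5]
  have h6 : (4:ℂ) ^ (h - 0) = 2 ^ (2*h) := by
    rw [show (4:ℂ) = 2^2 by norm_num, ← pow_mul, Nat.sub_zero]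
  rw [h6]
  ring
end

section
/- Let m' = 2m̄+1 be an odd positive integer. Then 2^{m'} · ∏_{i=1}^{m'} ( z + cos(2πi/m') ) = 2(z+1) · (V_{m̄}(z))^2 for all real z, where V_{m̄} is the Chebyshev polynomial of the third kind. -/
open Finset Polynomial

/-- Chebyshev polynomial of the third kind: `V 0 = 1`, `V 1 = 2X - 1`,
`V (n+2) = 2X * V (n+1) - V n`; it satisfies `V n (cos θ) = cos ((n+1/2)θ) / cos (θ/2)`. -/
noncomputable def chebyshevV : ℕ → Polynomial ℝ
  | 0 => 1
  | 1 => 2 * Polynomial.X - 1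
  | n + 2 => 2 * Polynomial.X * chebyshevV (n + 1) - chebyshevV n

lemma cheb_cos (n : ℕ) (θ : ℝ) :
    Real.cos (θ/2) * (chebyshevV n).eval (Real.cos θ)
      = Real.cos ((n + 1/2) * θ) := by
  induction n using Nat.twoStepInduction with
  | zero =>
    simp only [chebyshevV, eval_one, mul_one, Nat.cast_zero, zero_add]
    congr 1
    ring
  | one =>
    have h1 := Real.cos_add θ (θ/2)
    have h2 := Real.cos_sub θ (θ/2)
    have e1 : θ + θ/2 = ((1:ℝ) + 1/2) * θ := by ring
    have e2 : θ - θ/2 = θ/2 := by ring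
    rw [e1] at h1; rw [e2] at h2
    simp only [chebyshevV, eval_sub, eval_mul, eval_ofNat, eval_X, eval_one]
    push_cast
    linear_combination -h1 - h2
  | more n ih1 ih2 =>
    have h1 := Real.cos_add (((n:ℝ) + 1 + 1/2) * θ) θ
    have h2 := Real.cos_sub (((n:ℝ) + 1 + 1/2) * θ) θ
    have e1 : ((n:ℝ) + 1 + 1/2) * θ + θ = ((n:ℝ) + 2 + 1/2) * θ := by ring
    have e2 : ((n:ℝ) + 1 + 1/2) * θ - θ = ((n:ℝ) + 1/2) * θ := by ring
    rw [e1] at h1; rw [e2] at h2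
    simp only [chebyshevV, eval_sub, eval_mul, eval_ofNat, eval_X]
    push_cast
    push_cast at ih1 ih2
    linear_combination 2 * Real.cos θ * ih2 - ih1 - h1 - h2

lemma cheb_root (n k : ℕ) (hk : k < n) :
    (chebyshevV n).eval (Real.cos ((2*k+1) * Real.pi / (2*n+1))) = 0 := by
  set θ : ℝ := (2*k+1) * Real.pi / (2*n+1) with hθ
  have hden : (0:ℝ) < 2*n+1 := by positivity
  have hθpos : 0 < θ := by
    apply div_pos _ hden
    positivity
  have hθlt : θ < Real.pi := by
    rw [hθ, div_lt_iff₀ hden]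
    have : (2*(k:ℝ)+1) < 2*n+1 := by
      have : (k:ℝ) < n := by exact_mod_cast hk
      linarith
    nlinarith [Real.pi_pos]
  have hcos : Real.cos (θ/2) ≠ 0 := by
    have : 0 < Real.cos (θ/2) := by
      apply Real.cos_pos_of_mem_Ioo
      constructor <;> [linarith [Real.pi_pos]; linarith]
    linarith
  have h := cheb_cos n θ
  have hzero : Real.cos (((n:ℝ) + 1/2) * θ) = 0 := by
    rw [Real.cos_eq_zero_iff]
    refine ⟨k, ?_⟩
    rw [hθ]
    field_simp
    push_cast
    ring
  rw [hzero] at h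
  rcases mul_eq_zero.mp h with h' | h'
  · exact absurd h' hcos
  · exact h'

lemma cheb_deg (n : ℕ) :
    (chebyshevV n).natDegree ≤ n ∧ (chebyshevV n).coeff n = 2^n := by
  induction n using Nat.twoStepInduction with
  | zero => simp [chebyshevV]
  | one =>
    constructor
    · simp only [chebyshevV]
      apply le_trans (natDegree_sub_le _ _)
      apply max_le
      · apply le_trans (natDegree_mul_le)
        simp
      · simp
    · simp only [chebyshevV, coeff_sub, coeff_ofNat_mul, coeff_X_one, coeff_one]
      norm_num
  | more n ih1 ih2 =>
    constructor
    · simp only [chebyshevV]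
      apply le_trans (natDegree_sub_le _ _)
      apply max_le
      · apply le_trans (natDegree_mul_le)
        have h1 : (2 * X : ℝ[X]).natDegree ≤ 1 := by
          apply le_trans (natDegree_mul_le)
          simp
        omega
      · omega
    · simp only [chebyshevV, coeff_sub]
      rw [coeff_eq_zero_of_natDegree_lt (lt_of_le_of_lt ih1.1 (by omega))]
      rw [mul_assoc, coeff_ofNat_mul, coeff_X_mul, ih2.2]
      ring

lemma cheb_eq (n : ℕ) :
    chebyshevV n
      = C ((2:ℝ)^n) * ∏ k ∈ range n,
          (X - C (Real.cos ((2*k+1) * Real.pi / (2*n+1)))) := by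
  rcases Nat.eq_zero_or_pos n with rfl | hn
  · simp [chebyshevV]
  set r : ℕ → ℝ := fun k => Real.cos ((2*k+1) * Real.pi / (2*n+1)) with hr
  set Q : ℝ[X] := C ((2:ℝ)^n) * ∏ k ∈ range n, (X - C (r k)) with hQ
  have hmonic : (∏ k ∈ range n, (X - C (r k))).Monic :=
    monic_prod_of_monic _ _ fun k _ => monic_X_sub_C _
  have hdeg : (∏ k ∈ range n, (X - C (r k))).natDegree = n := by
    rw [natDegree_prod_of_monic _ _ fun k _ => monic_X_sub_C _]
    simp
  have hQdeg : Q.natDegree ≤ n := by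
    rw [hQ]
    apply le_trans natDegree_mul_le
    simp [hdeg]
  have hQcoeff : Q.coeff n = 2^n := by
    have hc := hmonic.coeff_natDegree
    rw [hdeg] at hc
    rw [hQ, coeff_C_mul, hc]
    ring
  set D : ℝ[X] := chebyshevV n - Q with hD
  have hrinj : Set.InjOn r ↑(range n) := by
    intro a ha b hb hab
    have hmem : ∀ c ∈ range n, (2*(c:ℝ)+1) * Real.pi / (2*n+1) ∈ Set.Icc 0 Real.pi := by
      intro c hc
      have hc' : c < n := mem_range.mp hc
      have hden : (0:ℝ) < 2*n+1 := by positivity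
      constructor
      · positivity
      · rw [div_le_iff₀ hden]
        have : (2*(c:ℝ)+1) ≤ 2*n+1 := by
          have : (c:ℝ) < n := by exact_mod_cast hc'
          linarith
        nlinarith [Real.pi_pos]
    have hθ := Real.injOn_cos (hmem a ha) (hmem b hb) hab
    have hden' : (0:ℝ) < 2*(n:ℝ)+1 := by positivity
    rw [div_eq_div_iff (ne_of_gt hden') (ne_of_gt hden')] at hθ
    have h2 : (2*(a:ℝ)+1) * Real.pi = (2*(b:ℝ)+1) * Real.pi :=
      mul_right_cancel₀ (ne_of_gt hden') hθ
    have h3 : (2*(a:ℝ)+1) = (2*(b:ℝ)+1) := mul_right_cancel₀ Real.pi_ne_zero h2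
    have : (a:ℝ) = b := by linarith
    exact_mod_cast this
  have hDzero : D = 0 := by
    apply eq_zero_of_natDegree_lt_card_of_eval_eq_zero' D ((range n).image r)
    · intro x hx
      obtain ⟨k, hk, rfl⟩ := mem_image.mp hx
      have hroot := cheb_root n k (mem_range.mp hk)
      have hQroot : Q.eval (r k) = 0 := by
        rw [hQ, eval_mul, eval_prod]
        apply mul_eq_zero_of_right
        apply Finset.prod_eq_zero hk
        simp [hr]
      rw [hD, eval_sub, hQroot, hroot, sub_zero]
    · rw [Finset.card_image_of_injOn hrinj, card_range]
      rcases eq_or_ne D 0 with h | h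
      · simp [h]; omega
      have hDle : D.natDegree ≤ n := le_trans (natDegree_sub_le _ _) (by
        simp [max_le_iff, (cheb_deg n).1, hQdeg])
      have hDcoeff : D.coeff n = 0 := by
        rw [hD, coeff_sub, (cheb_deg n).2, hQcoeff, sub_self]
      rcases lt_or_eq_of_le hDle with h' | h'
      · exact h'
      · exact absurd (Polynomial.leadingCoeff_eq_zero.mp
          (by rw [leadingCoeff, h', hDcoeff])) h
  exact sub_eq_zero.mp hDzero

lemma cheb_eval (n : ℕ) (z : ℝ) :
    (chebyshevV n).eval z
      = 2^n * ∏ i ∈ Finset.Icc 1 n, (z + Real.cos (2 * Real.pi * i / (2*n+1))) := by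
  rw [cheb_eq, eval_mul, eval_C, eval_prod]
  congr 1
  apply Finset.prod_nbij' (i := fun k => n - k) (j := fun i => n - i)
  · intro k hk
    simp only [mem_range] at hk
    simp only [Finset.mem_Icc]
    omega
  · intro i hi
    simp only [Finset.mem_Icc] at hi
    simp only [mem_range]
    omega
  · intro k hk
    simp only [mem_range] at hk
    omega
  · intro i hi
    simp only [Finset.mem_Icc] at hi
    omega
  · intro k hk
    simp only [mem_range] at hk
    rw [eval_sub, eval_X, eval_C]
    have hden : (0:ℝ) < 2*n+1 := by positivity
    have hcast : ((n - k : ℕ) : ℝ) = (n:ℝ) - k := by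
      rw [Nat.cast_sub (le_of_lt hk)]
    have harg : 2 * Real.pi * ((n - k : ℕ) : ℝ) / (2*n+1)
        = Real.pi - (2*k+1) * Real.pi / (2*n+1) := by
      rw [hcast]
      field_simp
      ring
    rw [harg, Real.cos_pi_sub]
    ring

theorem prod_cos_odd (mbar : ℕ) (m' : ℕ) (hm' : m' = 2 * mbar + 1) (z : ℝ) :
    2 ^ m' * ∏ i ∈ Finset.Icc 1 m', (z + Real.cos (2 * Real.pi * i / m'))
      = 2 * (z + 1) * ((chebyshevV mbar).eval z) ^ 2 := by
  subst hm'
  set n := mbar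
  have hden : (0:ℝ) < 2*n+1 := by positivity
  set f : ℕ → ℝ := fun i => z + Real.cos (2 * Real.pi * i / (2*n+1)) with hf
  have htop : f (2*n+1) = z + 1 := by
    rw [hf]
    simp only
    have : 2 * Real.pi * ((2*n+1 : ℕ) : ℝ) / ((2*n+1 : ℕ) : ℝ) = 2 * Real.pi := by
      rw [mul_div_assoc, div_self (by positivity), mul_one]
    push_cast at this ⊢
    rw [this, Real.cos_two_pi]
  have hsplit : ∏ i ∈ Finset.Icc 1 (2*n+1), f i
      = (∏ i ∈ Finset.Icc 1 (2*n), f i) * f (2*n+1) :=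
    Finset.prod_Icc_succ_top (by omega) f
  have hIoc : ∀ m : ℕ, Finset.Icc 1 m = Finset.Ioc 0 m := by
    intro m; rw [← Finset.Icc_add_one_left_eq_Ioc]; rfl
  have hcons : (∏ i ∈ Finset.Ioc 0 n, f i) * (∏ i ∈ Finset.Ioc n (2*n), f i)
      = ∏ i ∈ Finset.Ioc 0 (2*n), f i :=
    Finset.prod_Ioc_consecutive f (by omega) (by omega)
  have hmirror : ∏ i ∈ Finset.Ioc n (2*n), f i = ∏ i ∈ Finset.Ioc 0 n, f i := by
    apply Finset.prod_nbij' (i := fun k => 2*n+1 - k) (j := fun k => 2*n+1 - k)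
    · intro k hk
      simp only [Finset.mem_Ioc] at hk ⊢
      omega
    · intro k hk
      simp only [Finset.mem_Ioc] at hk ⊢
      omega
    · intro k hk
      simp only [Finset.mem_Ioc] at hk
      omega
    · intro k hk
      simp only [Finset.mem_Ioc] at hk
      omega
    · intro k hk
      simp only [Finset.mem_Ioc] at hk
      rw [hf]
      simp only
      congr 1
      have hcast : ((2*n+1 - k : ℕ) : ℝ) = 2*(n:ℝ)+1 - k := by
        rw [Nat.cast_sub (by omega)]
        push_cast; ring
      have harg : 2 * Real.pi * ((2*n+1 - k : ℕ) : ℝ) / (2*n+1)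
          = 2 * Real.pi - 2 * Real.pi * k / (2*n+1) := by
        rw [hcast]
        field_simp
      rw [harg, Real.cos_sub, Real.cos_two_pi, Real.sin_two_pi]
      ring
  have heval := cheb_eval n z
  have hprod : ∏ i ∈ Finset.Icc 1 (2*n+1), f i
      = (∏ i ∈ Finset.Icc 1 n, f i)^2 * (z + 1) := by
    rw [hsplit, htop, hIoc (2*n), ← hcons, hmirror, ← hIoc n]
    ring
  have hcast2 : ∀ i : ℕ, 2 * Real.pi * (i:ℝ) / ((2*n+1 : ℕ) : ℝ)
      = 2 * Real.pi * (i:ℝ) / (2*(n:ℝ)+1) := by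
    intro i; push_cast; ring_nf
  calc 2 ^ (2*n+1) * ∏ i ∈ Finset.Icc 1 (2*n+1), (z + Real.cos (2 * Real.pi * i / ((2*n+1:ℕ):ℝ)))
      = 2 ^ (2*n+1) * ∏ i ∈ Finset.Icc 1 (2*n+1), f i := by
        congr 1
        apply Finset.prod_congr rfl
        intro i _
        rw [hf]
        push_cast
        ring_nf
    _ = 2 ^ (2*n+1) * ((∏ i ∈ Finset.Icc 1 n, f i)^2 * (z + 1)) := by rw [hprod]
    _ = 2 * (z + 1) * (2^n * ∏ i ∈ Finset.Icc 1 n, f i) ^ 2 := by ring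
    _ = 2 * (z + 1) * ((chebyshevV n).eval z) ^ 2 := by rw [heval]
end

section
/- Let m' = 2m̄+2 be an even positive integer. Then 2^{m'} · ∏_{i=1}^{m'} ( z + cos(2πi/m') ) = 4(z^2−1) · (U_{m̄}(z))^2 for all real z, where U_{m̄} is the Chebyshev polynomial of the second kind. -/
open Finset Polynomial Real

private lemma wb_lt_succ {a : WithBot ℕ} {n : ℕ} : a < ((n+1 : ℕ) : WithBot ℕ) ↔ a ≤ (n : WithBot ℕ) := by
  cases a with
  | bot => refine iff_of_true ?_ bot_le; exact_mod_cast WithBot.bot_lt_coe (n+1)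
  | coe a => simp [Nat.cast_withBot, ← WithBot.coe_one, ← WithBot.coe_add, WithBot.coe_lt_coe, WithBot.coe_le_coe]

private lemma U_deg : ∀ n : ℕ,
    (Chebyshev.U ℝ (n : ℤ) - C ((2:ℝ)^n) * X ^ n).degree < (n : WithBot ℕ)
  | 0 => by
      simp [Chebyshev.U_zero]
  | 1 => by
      have h : Chebyshev.U ℝ ((1:ℕ) : ℤ) = 2 * X := Chebyshev.U_one ℝ
      have C2 : (C (2:ℝ)) = 2 := by exact_mod_cast C_eq_natCast (R:=ℝ) 2
      have hC : (C ((2:ℝ)^1) : ℝ[X]) * X ^ 1 = 2 * X := by rw [pow_one, pow_one, C2]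
      rw [h, hC, sub_self, degree_zero]
      exact_mod_cast WithBot.bot_lt_coe 1
  | (n+2) => by
      have h1 := U_deg n
      have h2 := U_deg (n+1)
      have hrec : Chebyshev.U ℝ ((n+2 : ℕ) : ℤ) = 2 * X * Chebyshev.U ℝ ((n+1:ℕ) : ℤ) - Chebyshev.U ℝ (n : ℤ) := by
        push_cast
        exact Chebyshev.U_add_two ℝ n
      have hC : (C ((2:ℝ)^(n+2)) : ℝ[X]) = 2 * C ((2:ℝ)^(n+1)) := by
        rw [pow_succ']
        rw [C_mul]
        exact_mod_cast rfl
      have key : Chebyshev.U ℝ ((n+2 : ℕ) : ℤ) - C ((2:ℝ)^(n+2)) * X ^ (n+2)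
          = 2 * X * (Chebyshev.U ℝ ((n+1:ℕ) : ℤ) - C ((2:ℝ)^(n+1)) * X ^ (n+1))
            - Chebyshev.U ℝ (n : ℤ) := by
        rw [hrec, hC]; ring
      rw [key]
      have hUn : (Chebyshev.U ℝ (n : ℤ)).degree ≤ (n : WithBot ℕ) := by
        have h' : Chebyshev.U ℝ (n : ℤ) = (Chebyshev.U ℝ (n : ℤ) - C ((2:ℝ)^n) * X ^ n) + C ((2:ℝ)^n) * X ^ n := by ring
        rw [h']
        refine (degree_add_le _ _).trans (max_le h1.le ?_)
        refine (degree_mul_le _ _).trans ?_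
        simp [degree_C (by positivity : ((2:ℝ)^n) ≠ 0)]
      have hA : (2 * X * (Chebyshev.U ℝ ((n+1:ℕ) : ℤ) - C ((2:ℝ)^(n+1)) * X ^ (n+1))).degree
          < ((n+2 : ℕ) : WithBot ℕ) := by
        refine (degree_mul_le _ _).trans_lt ?_
        have h2X : (2 * X : ℝ[X]).degree = 1 := by
          have : (2 * X : ℝ[X]) = C 2 * X := by rw [show (C (2:ℝ)) = 2 from by exact_mod_cast C_eq_natCast (R:=ℝ) 2]
          rw [this, degree_C_mul_X (by norm_num : (2:ℝ) ≠ 0)]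
        rw [h2X]
        have hle := wb_lt_succ.mp h2
        calc (1 : WithBot ℕ) + _ ≤ 1 + (n : WithBot ℕ) := add_le_add le_rfl hle
          _ < ((n+2 : ℕ) : WithBot ℕ) := by exact_mod_cast by omega
      refine (degree_sub_le _ _).trans_lt (max_lt hA (hUn.trans_lt ?_))
      exact_mod_cast by omega

private lemma U_eq_prod (n : ℕ) :
    Chebyshev.U ℝ (n : ℤ)
      = C ((2:ℝ)^n) * ∏ k ∈ Icc 1 n, (X + C (Real.cos (k * π / (n+1)))) := by
  set P : ℝ[X] := ∏ k ∈ Icc 1 n, (X + C (Real.cos (k * π / (n+1)))) with hP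
  have hPmonic : P.Monic := monic_prod_of_monic _ _ (fun k _ => monic_X_add_C _)
  have hPdeg : P.degree = (n : WithBot ℕ) := by
    rw [hP, degree_prod]
    simp [degree_X_add_C]
  have hdiff : (P - X ^ n).degree < (n : WithBot ℕ) := by
    have := degree_sub_lt (q := X ^ n) (by rw [hPdeg, degree_X_pow]) hPmonic.ne_zero
      (by rw [hPmonic.leadingCoeff, leadingCoeff_X_pow])
    rwa [hPdeg] at this
  have hq : (Chebyshev.U ℝ (n : ℤ) - C ((2:ℝ)^n) * P).degree < (n : WithBot ℕ) := by
    have hsplit : Chebyshev.U ℝ (n : ℤ) - C ((2:ℝ)^n) * P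
        = (Chebyshev.U ℝ (n : ℤ) - C ((2:ℝ)^n) * X ^ n) - C ((2:ℝ)^n) * (P - X ^ n) := by
      ring
    rw [hsplit]
    refine (degree_sub_le _ _).trans_lt (max_lt (U_deg n) ?_)
    refine (degree_mul_le _ _).trans_lt ?_
    rw [degree_C (by positivity : ((2:ℝ)^n) ≠ 0), zero_add]
    exact hdiff
  have heval : ∀ j ∈ Icc 1 n,
      (Chebyshev.U ℝ (n : ℤ) - C ((2:ℝ)^n) * P).eval (Real.cos (j * π / (n+1))) = 0 := by
    intro j hj
    obtain ⟨hj1, hjn⟩ := mem_Icc.mp hj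
    have hden : (0:ℝ) < (n:ℝ) + 1 := by positivity
    have hU : (Chebyshev.U ℝ (n : ℤ)).eval (Real.cos ((j:ℝ) * π / (n+1))) = 0 := by
      have hθpos : 0 < (j:ℝ) * π / (n+1) := by
        have : (0:ℝ) < j := by exact_mod_cast hj1
        positivity
      have hθlt : (j:ℝ) * π / (n+1) < π := by
        rw [div_lt_iff₀ hden]
        have hj' : (j:ℝ) < (n:ℝ) + 1 := by exact_mod_cast Nat.lt_succ_of_le hjn
        nlinarith [Real.pi_pos]
      have hs : Real.sin ((j:ℝ) * π / (n+1)) ≠ 0 :=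
        ne_of_gt (Real.sin_pos_of_pos_of_lt_pi hθpos hθlt)
      have hkey := Polynomial.Chebyshev.U_real_cos ((j:ℝ) * π / (n+1)) (n : ℤ)
      have harg : (((n:ℤ):ℝ) + 1) * ((j:ℝ) * π / (n+1)) = (j:ℝ) * π := by
        push_cast
        field_simp
      rw [harg, Real.sin_nat_mul_pi] at hkey
      exact (mul_eq_zero.mp hkey).resolve_right hs
    have hPe : P.eval (Real.cos ((j:ℝ) * π / (n+1))) = 0 := by
      rw [hP, eval_prod]
      refine Finset.prod_eq_zero (i := n + 1 - j) (mem_Icc.mpr ⟨by omega, by omega⟩) ?_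
      have hcast : ((n + 1 - j : ℕ):ℝ) = (n:ℝ) + 1 - j := by
        push_cast [Nat.cast_sub (by omega : j ≤ n + 1)]
        ring
      rw [eval_add, eval_X, eval_C, hcast,
        show ((n:ℝ) + 1 - j) * π / ((n:ℝ)+1) = π - (j:ℝ) * π / (n+1) by field_simp,
        Real.cos_pi_sub]
      ring
    simp [eval_sub, eval_mul, hU, hPe]
  have hinj : Set.InjOn (fun j : ℕ => Real.cos (j * π / (n+1))) (Icc 1 n : Finset ℕ) := by
    intro a ha b hb hab
    simp only [coe_Icc, Set.mem_Icc] at ha hb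
    have hden : (0:ℝ) < (n:ℝ) + 1 := by positivity
    have hmem : ∀ c : ℕ, c ≤ n → (c:ℝ) * π / (n+1) ∈ Set.Icc 0 π := by
      intro c hc
      constructor
      · positivity
      · rw [div_le_iff₀ hden]
        have : (c:ℝ) ≤ (n:ℝ) + 1 := by exact_mod_cast Nat.le_succ_of_le hc
        nlinarith [Real.pi_pos]
    have h1 := Real.injOn_cos (hmem a ha.2) (hmem b hb.2) hab
    rw [div_left_inj' hden.ne', mul_left_inj' Real.pi_ne_zero] at h1
    exact_mod_cast h1
  by_cases hq0 : Chebyshev.U ℝ (n : ℤ) - C ((2:ℝ)^n) * P = 0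
  · exact sub_eq_zero.mp hq0
  · exfalso
    apply hq0
    have hcard : ((Icc 1 n).image (fun j : ℕ => Real.cos (j * π / (n+1)))).card = n := by
      rw [Finset.card_image_of_injOn hinj, Nat.card_Icc]
      omega
    refine eq_zero_of_natDegree_lt_card_of_eval_eq_zero' _ ((Icc 1 n).image (fun j : ℕ => Real.cos (j * π / (n+1)))) ?_ ?_
    · intro x hx
      obtain ⟨j, hj, rfl⟩ := Finset.mem_image.mp hx
      exact heval j hj
    · rw [hcard]
      exact (natDegree_lt_iff_degree_lt hq0).mpr (by exact_mod_cast hq)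

private lemma U_eval_prod (n : ℕ) (z : ℝ) :
    (Chebyshev.U ℝ (n : ℤ)).eval z
      = 2 ^ n * ∏ k ∈ Icc 1 n, (z + Real.cos (k * π / (n+1))) := by
  rw [U_eq_prod n]
  simp [eval_prod]

theorem prod_cos_even (mbar : ℕ) (m' : ℕ) (hm' : m' = 2 * mbar + 2) (z : ℝ) :
    2 ^ m' * ∏ i ∈ Finset.Icc 1 m', (z + Real.cos (2 * Real.pi * i / m'))
      = 4 * (z ^ 2 - 1) * ((Polynomial.Chebyshev.U ℝ (mbar : ℤ)).eval z) ^ 2 := by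
  subst hm'
  set n := mbar with hn
  have hden : ((n:ℝ) + 1) ≠ 0 := by positivity
  have hcos : ∀ i : ℕ, Real.cos (2 * π * i / ((2*n+2:ℕ):ℝ)) = Real.cos (i * π / (n+1)) := by
    intro i
    congr 1
    push_cast
    field_simp
  have hrw : ∏ i ∈ Icc 1 (2*n+2), (z + Real.cos (2 * π * i / ((2*n+2:ℕ):ℝ)))
      = ∏ i ∈ Icc 1 (2*n+2), (z + Real.cos (i * π / (n+1))) := by
    refine Finset.prod_congr rfl fun i _ => by rw [hcos i]
  rw [hrw, show Icc 1 (2*n+2) = Ioc 0 (2*n+2) from Finset.Icc_add_one_left_eq_Ioc 0 (2*n+2)]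
  -- split the product
  have hsplit : (∏ i ∈ Ioc 0 (n+1), (z + Real.cos (i * π / (n+1))))
      * ∏ i ∈ Ioc (n+1) (2*n+2), (z + Real.cos (i * π / (n+1)))
      = ∏ i ∈ Ioc 0 (2*n+2), (z + Real.cos (i * π / (n+1))) :=
    Finset.prod_Ioc_consecutive _ (by omega) (by omega)
  rw [← hsplit]
  -- second product: reindex i ↦ 2n+2-i onto Icc 0 n
  have hsecond : ∏ i ∈ Ioc (n+1) (2*n+2), (z + Real.cos (i * π / (n+1)))
      = ∏ j ∈ Icc 0 n, (z + Real.cos (j * π / (n+1))) := by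
    refine Finset.prod_bij' (fun i _ => 2*n+2-i) (fun j _ => 2*n+2-j) ?_ ?_ ?_ ?_ ?_
    · intro i hi; simp only [mem_Ioc] at hi
      show 2*n+2-i ∈ Icc 0 n
      exact mem_Icc.mpr ⟨by omega, by omega⟩
    · intro j hj; simp only [mem_Icc] at hj
      show 2*n+2-j ∈ Ioc (n+1) (2*n+2)
      exact mem_Ioc.mpr ⟨by omega, by omega⟩
    · intro i hi; simp only [mem_Ioc] at hi
      show 2*n+2-(2*n+2-i) = i
      omega
    · intro j hj; simp only [mem_Icc] at hj
      show 2*n+2-(2*n+2-j) = j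
      omega
    · intro i hi
      simp only [mem_Ioc] at hi
      show z + Real.cos (i * π / (n+1)) = z + Real.cos (((2*n+2-i : ℕ)) * π / (n+1))
      congr 1
      have hc : ((2*n+2-i : ℕ):ℝ) = 2*(n:ℝ)+2-i := by
        push_cast [Nat.cast_sub (by omega : i ≤ 2*n+2)]
        ring
      rw [hc, show (2*(n:ℝ)+2-i) * π / ((n:ℝ)+1) = 2*π - (i:ℝ)*π/((n:ℝ)+1) by
        field_simp]
      rw [Real.cos_two_pi_sub]
  rw [hsecond]
  -- peel endpoints
  have hfirst : ∏ i ∈ Ioc 0 (n+1), (z + Real.cos (i * π / (n+1)))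
      = (∏ i ∈ Icc 1 n, (z + Real.cos (i * π / (n+1)))) * (z - 1) := by
    rw [← Finset.Icc_add_one_left_eq_Ioc, Finset.prod_Icc_succ_top (by omega)]
    congr 1
    rw [show ((n+1:ℕ):ℝ) * π / ((n:ℝ)+1) = π by push_cast; field_simp, Real.cos_pi]
    ring
  have hzero : ∏ j ∈ Icc 0 n, (z + Real.cos (j * π / (n+1)))
      = (z + 1) * ∏ j ∈ Icc 1 n, (z + Real.cos (j * π / (n+1))) := by
    rw [Finset.Icc_eq_cons_Ioc (by omega), Finset.prod_cons, ← Finset.Icc_add_one_left_eq_Ioc 0 n]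
    congr 2
    rw [show ((0:ℕ):ℝ) * π / ((n:ℝ)+1) = 0 by push_cast; ring, Real.cos_zero]
  rw [hfirst, hzero, U_eval_prod]
  ring
end
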